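/- arXiv:2506.22649 — 2 statements merged into one kernel-verified Lean document; each statement's English description precedes it below -/
import Mathlib

section
/- Let a, b, c > 0 with min(a,b) ≤ c ≤ max(a,b). Then there is no real α with c^α = a^α + b^α. -/
lemma aux_pow_lt (a b c α : ℝ) (ha : 0 < a) (hb : 0 < b) (hc : 0 < c)
    (hac : a ≤ c) (hcb : c ≤ b) : c ^ α < a ^ α + b ^ α := by
  rcases le_or_gt 0 α with hα | hα
  · have h1 : c ^ α ≤ b ^ α := Real.rpow_le_rpow hc.le hcb hα
    have h2 : 0 < a ^ α := Real.rpow_pos_of_pos ha α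
    linarith
  · have h1 : c ^ α ≤ a ^ α := Real.rpow_le_rpow_of_nonpos ha hac hα.le
    have h2 : 0 < b ^ α := Real.rpow_pos_of_pos hb α
    linarith

theorem power_additivity_no_solution (a b c : ℝ)
    (ha : 0 < a) (hb : 0 < b) (hc : 0 < c)
    (h1 : min a b ≤ c) (h2 : c ≤ max a b) :
    ¬ ∃ α : ℝ, c ^ α = a ^ α + b ^ α := by
  rintro ⟨α, hα⟩
  rcases le_total a b with hab | hab
  · rw [min_eq_left hab] at h1
    rw [max_eq_right hab] at h2
    exact absurd hα (aux_pow_lt a b c α ha hb hc h1 h2).ne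
  · rw [min_eq_right hab] at h1
    rw [max_eq_left hab] at h2
    have := aux_pow_lt b a c α hb ha hc h1 h2
    linarith
end

section
/- Let a, b, c > 0 with c < min(a,b). Then there exists a unique α < 0 such that c^α = a^α + b^α. -/
/-!
Dividing by `c ^ α`, the equation becomes `(a / c) ^ α + (b / c) ^ α = 1`. Both bases exceed `1`,
so the left side is continuous and strictly increasing in `α`, tends to `0` as `α → -∞` and
equals `2` at `α = 0`; it therefore takes the value `1` exactly once, at a negative exponent.
-/

open Filter Topology Function

theorem existsUnique_lt_eq_of_tendsto_atBot {α δ : Type*} [ConditionallyCompleteLinearOrder α]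
    [TopologicalSpace α] [OrderTopology α] [DenselyOrdered α] [LinearOrder δ]
    [TopologicalSpace δ] [OrderClosedTopology δ] {f : α → δ} (hf : Continuous f)
    (hinj : Injective f) {L y : δ} {x₀ : α} (hlim : Tendsto f atBot (𝓝 L)) (hLy : L < y)
    (hy : y < f x₀) : ∃! x, x < x₀ ∧ f x = y := by
  obtain ⟨x₁, hx₁, hfx₁⟩ :=
    ((eventually_le_atBot x₀).and (hlim.eventually_lt_const hLy)).exists
  obtain ⟨x, hx, rfl⟩ := intermediate_value_Ico hx₁ hf.continuousOn ⟨hfx₁.le, hy⟩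
  exact ⟨x, ⟨hx.2, rfl⟩, fun x' hx' => hinj hx'.2⟩

theorem Real.rpow_eq_add_rpow_iff_div {a b c : ℝ} (ha : 0 ≤ a) (hb : 0 ≤ b) (hc : 0 < c) (x : ℝ) :
    c ^ x = a ^ x + b ^ x ↔ (a / c) ^ x + (b / c) ^ x = 1 := by
  rw [Real.div_rpow ha hc.le, Real.div_rpow hb hc.le, ← add_div,
    div_eq_one_iff_eq (Real.rpow_pos_of_pos hc x).ne', eq_comm]

theorem power_additivity_unique_neg (a b c : ℝ)
    (ha : 0 < a) (hb : 0 < b) (hc : 0 < c) (h : c < min a b) :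
    ∃! α : ℝ, α < 0 ∧ c ^ α = a ^ α + b ^ α := by
  have hac : 1 < a / c := (one_lt_div hc).mpr (h.trans_le (min_le_left a b))
  have hbc : 1 < b / c := (one_lt_div hc).mpr (h.trans_le (min_le_right a b))
  simp_rw [Real.rpow_eq_add_rpow_iff_div ha.le hb.le hc]
  refine existsUnique_lt_eq_of_tendsto_atBot (L := 0) ?_ ?_ ?_ zero_lt_one ?_
  · exact (Real.continuous_const_rpow (by positivity)).add
      (Real.continuous_const_rpow (by positivity))
  · exact ((Real.strictMono_rpow_of_base_gt_one hac).add
      (Real.strictMono_rpow_of_base_gt_one hbc)).injective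
  · simpa using (tendsto_rpow_atBot_of_base_gt_one _ hac).add
      (tendsto_rpow_atBot_of_base_gt_one _ hbc)
  · norm_num
end
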